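/- arXiv:2106.13879 — 5 statements merged into one kernel-verified Lean document; each statement's English description precedes it below -/
import Mathlib

section
/- For every integer m ≥ 1 and s ≥ 1, there exists a unique integer t ≥ 0 such that C(s+t-1, t-1) < m ≤ C(s+t, t), where C(n,k) denotes the binomial coefficient (with the convention C(s-1,-1)=0). -/
/-- For every `m ≥ 1`, `s ≥ 1`, there is a unique `t ≥ 0` with
`C(s+t-1, t-1) < m ≤ C(s+t, t)`, with the convention `C(s-1, -1) = 0`
(encoded by the `if t = 0` case). -/
theorem stmt0 (m s : ℕ) (hm : 1 ≤ m) (hs : 1 ≤ s) :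
    ∃! t : ℕ,
      (if t = 0 then 0 else (s + t - 1).choose (t - 1)) < m ∧
      m ≤ (s + t).choose t := by
  set f : ℕ → ℕ := fun t => (s + t).choose t with hf
  have hmono : StrictMono f := by
    apply strictMono_nat_of_lt_succ
    intro t
    have h1 : s + (t + 1) = (s + t) + 1 := by ring
    simp only [hf, h1, Nat.choose_succ_succ]
    have : 0 < (s + t).choose (t + 1) := Nat.choose_pos (by omega)
    simp only [Nat.succ_eq_add_one]
    omega
  have hbig : ∃ t, m ≤ f t := by
    refine ⟨m - 1, ?_⟩
    have : (1 + (m - 1)).choose (m - 1) ≤ (s + (m - 1)).choose (m - 1) :=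
      Nat.choose_le_choose _ (by omega)
    have h2 : (1 + (m - 1)).choose (m - 1) = m := by
      rw [Nat.add_comm, Nat.choose_succ_self_right]; omega
    simp only [hf]; omega
  classical
  set t := Nat.find hbig with ht
  have hspec : m ≤ f t := Nat.find_spec hbig
  have hmin : ∀ k < t, ¬ m ≤ f k := fun k hk => Nat.find_min hbig hk
  refine ⟨t, ⟨?_, hspec⟩, ?_⟩
  · by_cases h0 : t = 0
    · simp [h0]; omega
    · rw [if_neg h0]
      have h1 : s + t - 1 = s + (t - 1) := by omega
      have := hmin (t - 1) (by omega)
      rw [h1]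
      simpa [hf] using this
  · rintro t' ⟨h1, h2⟩
    by_contra hne
    rcases Nat.lt_or_ge t' t with h | h
    · exact hmin t' h h2
    · have ht' : t < t' := by omega
      have h0 : t' ≠ 0 := by omega
      rw [if_neg h0] at h1
      have heq : s + t' - 1 = s + (t' - 1) := by omega
      rw [heq] at h1
      have : f t ≤ f (t' - 1) := hmono.monotone (by omega)
      have : f (t' - 1) < m := h1
      omega
end

section
/- Let p(m,s) = t·m − C(s+t, t−1) where t is the unique integer with C(s+t−1,t−1) < m ≤ C(s+t,t). Then p satisfies the dynamic-programming recurrence p(m,s) = min over 1 ≤ m̃ ≤ m−1 of (m̃ + p(m̃, s) + p(m−m̃, s−1)), for all m ≥ 2 and s ≥ 2, with base cases p(1,s) = 0 and p(m,1) = m(m−1)/2. -/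
/-- The repetition number: the least `t` with `m ≤ C(s+t, t)`. -/
noncomputable def tRep (m s : ℕ) : ℕ := sInf {t : ℕ | m ≤ (s + t).choose t}

/-- `p(m,s) = t·m − C(s+t, t−1)` with the convention `C(s,−1) = 0`. -/
noncomputable def pRev (m s : ℕ) : ℤ :=
  (tRep m s : ℤ) * m -
    (if tRep m s = 0 then 0 else ((s + tRep m s).choose (tRep m s - 1) : ℤ))

/-- `p̃(m,s) = (t−1)·m − C(s+t, t−1) + 1` with the convention `C(s,−1) = 0`. -/
noncomputable def pMod (m s : ℕ) : ℤ :=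
  ((tRep m s : ℤ) - 1) * m -
    (if tRep m s = 0 then 0 else ((s + tRep m s).choose (tRep m s - 1) : ℤ)) + 1

noncomputable def phi (m s t : ℕ) : ℤ :=
  (t : ℤ) * m - (if t = 0 then 0 else ((s + t).choose (t - 1) : ℤ))

lemma pRev_phi (m s : ℕ) : pRev m s = phi m s (tRep m s) := rfl

lemma beta_step {s : ℕ} (hs : 1 ≤ s) (t : ℕ) :
    (s + t).choose t < (s + (t+1)).choose (t+1) := by
  have h : s + (t+1) = (s + t) + 1 := by omega
  rw [h, Nat.choose_succ_succ]
  simp only [Nat.succ_eq_add_one]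
  have : 0 < (s + t).choose (t+1) := Nat.choose_pos (by omega)
  omega

lemma beta_mono {s : ℕ} (hs : 1 ≤ s) {a b : ℕ} (hab : a ≤ b) :
    (s + a).choose a ≤ (s + b).choose b := by
  induction b, hab using Nat.le_induction with
  | base => exact le_refl _
  | succ n hn ih => exact le_trans ih (le_of_lt (beta_step hs n))

lemma tRep_mem {m s : ℕ} (hs : 1 ≤ s) : m ≤ (s + tRep m s).choose (tRep m s) := by
  have hne : {t : ℕ | m ≤ (s + t).choose t}.Nonempty := by
    refine ⟨m, ?_⟩
    have h1 : (1 + m).choose m ≤ (s + m).choose m :=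
      Nat.choose_le_choose m (by omega)
    have h2 : (1 + m).choose m = m + 1 := by
      rw [Nat.add_comm]; exact Nat.choose_succ_self_right m
    simp only [Set.mem_setOf_eq]; omega
  exact Nat.sInf_mem hne

lemma tRep_le {m s t : ℕ} (h : m ≤ (s + t).choose t) : tRep m s ≤ t :=
  Nat.sInf_le h

lemma tRep_lt {m s t : ℕ} (h : t < tRep m s) : (s + t).choose t < m := by
  have := Nat.notMem_of_lt_sInf (s := {t : ℕ | m ≤ (s + t).choose t}) h
  simp only [Set.mem_setOf_eq, not_le] at this
  exact this

lemma tRep_eq {m s t : ℕ} (hs : 1 ≤ s) (h1 : m ≤ (s + t).choose t)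
    (h2 : ∀ t' : ℕ, t' + 1 = t → (s + t').choose t' < m) : tRep m s = t := by
  refine le_antisymm (tRep_le h1) ?_
  by_contra h
  push_neg at h
  have hmem := tRep_mem (m := m) hs
  obtain ⟨t', ht'⟩ : ∃ t', t' + 1 = t := ⟨t - 1, by omega⟩
  have h3 : (s + tRep m s).choose (tRep m s) ≤ (s + t').choose t' :=
    beta_mono hs (by omega)
  have := h2 t' ht'
  omega

lemma phi_succ (m s t : ℕ) : phi m s (t+1) = phi m s t + m - ((s + t).choose t : ℤ) := by
  unfold phi
  cases t with
  | zero => simp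
  | succ k =>
    have h1 : s + (k + 1 + 1) = (s + (k+1)) + 1 := by omega
    have h2 : (s + (k+1) + 1).choose (k+1) = (s+(k+1)).choose k + (s+(k+1)).choose (k+1) :=
      Nat.choose_succ_succ _ _
    simp only [h1, h2, Nat.add_sub_cancel, if_neg (Nat.succ_ne_zero k),
      if_neg (Nat.succ_ne_zero (k+1))]
    push_cast
    ring

lemma phi_le {m s : ℕ} (hs : 1 ≤ s) (t' : ℕ) : phi m s t' ≤ pRev m s := by
  rw [pRev_phi]
  set T := tRep m s with hT
  rcases le_or_gt t' T with hle | hlt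
  · -- increasing up to T
    have key : ∀ d : ℕ, phi m s (T - d) ≤ phi m s T := by
      intro d
      induction d with
      | zero => simp
      | succ n ih =>
        rcases le_or_gt T n with h | h
        · have : T - (n+1) = T - n := by omega
          rw [this]; exact ih
        · have hlt2 : T - (n+1) < T := by omega
          have hstep : (s + (T - (n+1))).choose (T - (n+1)) < m :=
            tRep_lt (by omega)
          have he : T - (n+1) + 1 = T - n := by omega
          have := phi_succ m s (T - (n+1))
          rw [he] at this
          have : phi m s (T - (n+1)) ≤ phi m s (T - n) := by
            rw [this]
            have : ((s + (T - (n+1))).choose (T - (n+1)) : ℤ) < m := by exact_mod_cast hstep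
            linarith
          linarith
    have := key (T - t')
    have he : T - (T - t') = t' := by omega
    rwa [he] at this
  · -- decreasing after T
    have hm : m ≤ (s + T).choose T := tRep_mem hs
    have key : ∀ b : ℕ, T ≤ b → phi m s b ≤ phi m s T := by
      intro b hb
      induction b, hb using Nat.le_induction with
      | base => exact le_refl _
      | succ n hn ih =>
        have hc : m ≤ (s + n).choose n := le_trans hm (beta_mono hs hn)
        have := phi_succ m s n
        have hc' : (m : ℤ) ≤ ((s + n).choose n : ℤ) := by exact_mod_cast hc
        linarith
    exact key t' (le_of_lt hlt)

lemma keyA (m k a u : ℕ) (hkm : k ≤ m) :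
    (k:ℤ) + phi k (u+1) a + phi (m-k) u (a+1) = phi m (u+1) (a+1) := by
  have hc : ((m-k:ℕ):ℤ) = (m:ℤ) - k := by
    rw [Nat.cast_sub hkm]
  unfold phi
  rw [hc]
  cases a with
  | zero =>
    simp only [if_neg one_ne_zero, if_pos rfl]
    norm_num
    ring
  | succ b =>
    simp only [if_neg (Nat.succ_ne_zero b), if_neg (Nat.succ_ne_zero (b+1)),
      Nat.add_sub_cancel]
    have hp : (u+1+(b+1+1)).choose (b+1) = (u+1+(b+1)).choose b + (u+1+(b+1)).choose (b+1) := by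
      have h : u+1+(b+1+1) = (u+1+(b+1))+1 := by omega
      rw [h, Nat.choose_succ_succ]
    have h2 : u + (b+1+1) = u + 1 + (b+1) := by omega
    rw [hp, h2]
    push_cast
    ring

lemma keyB (m k a u : ℕ) (hkm : k ≤ m) (hmk : m - k = (u + a).choose a) :
    (k:ℤ) + phi k (u+1) a + phi (m-k) u a = phi m (u+1) (a+1) := by
  have hc : ((m-k:ℕ):ℤ) = (m:ℤ) - k := by rw [Nat.cast_sub hkm]
  have hk' : (k:ℤ) = (m:ℤ) - ((u+a).choose a : ℤ) := by
    have h2 : ((m-k:ℕ):ℤ) = ((u+a).choose a : ℤ) := by exact_mod_cast hmk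
    rw [hc] at h2
    omega
  unfold phi
  rw [hc, hk']
  cases a with
  | zero =>
    simp only [if_pos rfl]
    norm_num
  | succ b =>
    simp only [if_neg (Nat.succ_ne_zero b), if_neg (Nat.succ_ne_zero (b+1)),
      Nat.add_sub_cancel]
    have hp1 : (u+1+(b+1+1)).choose (b+1)
        = (u+1+(b+1)).choose b + (u+1+(b+1)).choose (b+1) := by
      have h : u+1+(b+1+1) = (u+1+(b+1))+1 := by omega
      rw [h, Nat.choose_succ_succ]
    have hp2 : (u+1+(b+1)).choose (b+1) = (u+(b+1)).choose b + (u+(b+1)).choose (b+1) := by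
      have h : u+1+(b+1) = (u+(b+1))+1 := by omega
      rw [h, Nat.choose_succ_succ]
    rw [hp1, hp2]
    push_cast
    ring

lemma tRep_one (s : ℕ) : tRep 1 s = 0 := by
  have h : (1:ℕ) ≤ (s+0).choose 0 := by simp
  have := tRep_le h
  omega

lemma pRev_one (s : ℕ) : pRev 1 s = 0 := by
  rw [pRev_phi, tRep_one]
  simp [phi]

lemma tRep_pos {m s : ℕ} (hm : 2 ≤ m) (hs : 1 ≤ s) : 1 ≤ tRep m s := by
  by_contra h
  have h0 : tRep m s = 0 := by omega
  have hmem := tRep_mem (m := m) hs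
  rw [h0] at hmem
  simp at hmem
  omega

lemma f_ge {m s k : ℕ} (hs : 2 ≤ s) (hm : 2 ≤ m) (hk : 1 ≤ k) (hkm : k < m) :
    pRev m s ≤ (k : ℤ) + pRev k s + pRev (m - k) (s - 1) := by
  obtain ⟨a, ha⟩ : ∃ a, tRep m s = a + 1 :=
    ⟨tRep m s - 1, by have := tRep_pos (m := m) (s := s) hm (by omega); omega⟩
  obtain ⟨u, hu⟩ : ∃ u, s = u + 2 := ⟨s - 2, by omega⟩
  subst hu
  have h1 : phi k (u+2) a ≤ pRev k (u+2) := phi_le (by omega) a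
  have h2 : phi (m-k) (u+2-1) (a+1) ≤ pRev (m-k) (u+2-1) := phi_le (by omega) (a+1)
  have key : pRev m (u+2) = (k:ℤ) + phi k (u+2) a + phi (m-k) (u+1) (a+1) :=
    (keyA m k a (u+1) (le_of_lt hkm)).symm ▸ by rw [pRev_phi, ha]
  have hred : u + 2 - 1 = u + 1 := rfl
  rw [hred] at h2
  rw [key]
  show (k:ℤ) + phi k (u+2) a + phi (m-k) (u+1) (a+1)
      ≤ (k:ℤ) + pRev k (u+2) + pRev (m-k) (u+2-1)
  rw [hred]
  linarith

lemma pRev_base1 (m : ℕ) (hm : 1 ≤ m) : pRev m 1 = (m : ℤ) * ((m : ℤ) - 1) / 2 := by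
  have hC : ∀ t : ℕ, (1 + t).choose t = t + 1 := by
    intro t; rw [Nat.add_comm]; exact Nat.choose_succ_self_right t
  rcases Nat.lt_or_ge m 2 with h | h
  · have hm1 : m = 1 := by omega
    subst hm1; rw [pRev_one]; norm_num
  · have ht : tRep m 1 = m - 1 := by
      apply tRep_eq (le_refl 1)
      · rw [hC]; omega
      · intro t' ht'; rw [hC]; omega
    rw [pRev_phi, ht]
    unfold phi
    rw [if_neg (by omega : ¬ (m - 1 = 0))]
    have h1 : 1 + (m - 1) = m := by omega
    rw [h1]
    have hsymm : m.choose (m - 1 - 1) = m.choose 2 := by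
      have h2 : m - 1 - 1 = m - 2 := by omega
      rw [h2]
      exact Nat.choose_symm (by omega)
    rw [hsymm]
    have h2 : 2 * m.choose 2 = m * (m - 1) := by
      rw [Nat.choose_two_right]
      have hd : 2 ∣ m * (m - 1) := by
        rcases Nat.even_or_odd m with he | ho
        · exact Dvd.dvd.mul_right he.two_dvd _
        · have he2 : Even (m - 1) := by
            rcases ho with ⟨j, hj⟩; exact ⟨j, by omega⟩
          exact Dvd.dvd.mul_left he2.two_dvd _
      omega
    have h3 : (m : ℤ) * ((m : ℤ) - 1) = 2 * (m.choose 2 : ℤ) := by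
      have h4 : ((2 * m.choose 2 : ℕ) : ℤ) = ((m * (m - 1) : ℕ) : ℤ) := by
        exact_mod_cast congrArg (fun x : ℕ => (x : ℤ)) h2
      push_cast [Nat.cast_sub (by omega : 1 ≤ m)] at h4
      linarith
    rw [h3, Int.mul_ediv_cancel_left _ two_ne_zero]
    push_cast [Nat.cast_sub (by omega : 1 ≤ m)]
    linarith

/-- `p` satisfies the Revolve dynamic-programming recurrence
`p(m,s) = min_{1 ≤ m̃ ≤ m−1} (m̃ + p(m̃,s) + p(m−m̃,s−1))` for `m ≥ 2`, `s ≥ 2`,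
with base cases `p(1,s) = 0` and `p(m,1) = m(m−1)/2`. -/
theorem stmt1 :
    (∀ s : ℕ, 1 ≤ s → pRev 1 s = 0) ∧
    (∀ m : ℕ, 1 ≤ m → pRev m 1 = (m : ℤ) * ((m : ℤ) - 1) / 2) ∧
    (∀ m s : ℕ, ∀ hm : 2 ≤ m, ∀ hs : 2 ≤ s,
      pRev m s =
        (Finset.Icc 1 (m - 1)).inf' (by rw [Finset.nonempty_Icc]; omega)
          (fun k => (k : ℤ) + pRev k s + pRev (m - k) (s - 1))) := by
  refine ⟨fun s _ => pRev_one s, fun m hm => pRev_base1 m hm, ?_⟩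
  intro m s hm hs
  obtain ⟨u, hu⟩ : ∃ u, s = u + 2 := ⟨s - 2, by omega⟩
  subst hu
  obtain ⟨a, ha⟩ : ∃ a, tRep m (u+2) = a + 1 :=
    ⟨tRep m (u+2) - 1, by
      have := tRep_pos (m := m) (s := u+2) hm (by omega); omega⟩
  have hub : m ≤ (u+2+(a+1)).choose (a+1) := by
    have := tRep_mem (m := m) (s := u+2) (by omega)
    rwa [ha] at this
  have hlb : (u+2+a).choose a < m := tRep_lt (by rw [ha]; omega)
  -- Pascal facts
  have hPa : ∀ b, a = b + 1 →
      (u+2+b).choose b + (u+1+a).choose a = (u+2+a).choose a := by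
    intro b hb; subst hb
    have h1 : u+2+(b+1) = (u+2+b)+1 := by omega
    have h2 : u+1+(b+1) = u+2+b := by omega
    rw [h1, h2, Nat.choose_succ_succ]
  have hQa : ∀ b, a = b + 1 → (u+1+b).choose b < (u+1+a).choose a := by
    intro b hb; subst hb
    exact beta_step (by omega) b
  have hP2 : (u+2+(a+1)).choose (a+1)
      = (u+2+a).choose a + (u+1+(a+1)).choose (a+1) := by
    have h1 : u+2+(a+1) = (u+2+a)+1 := by omega
    have h2 : u+1+(a+1) = u+2+a := by omega
    rw [h1, h2, Nat.choose_succ_succ]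
  have hstep : (u+1+a).choose a < (u+1+(a+1)).choose (a+1) := beta_step (by omega) a
  have hc1pos : 1 ≤ (u+1+a).choose a := Nat.choose_pos (by omega)
  have hb1pos : 1 ≤ (u+2+a).choose a := Nat.choose_pos (by omega)
  have hc1b1 : (u+1+a).choose a ≤ (u+2+a).choose a := Nat.choose_le_choose a (by omega)
  apply le_antisymm
  · apply Finset.le_inf'
    intro k hk
    rw [Finset.mem_Icc] at hk
    exact f_ge (by omega) hm (by omega) (by omega)
  · -- choose the witness k according to the position of m
    have main : ∃ k, 1 ≤ k ∧ k < m ∧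
        (k : ℤ) + pRev k (u+2) + pRev (m-k) (u+1) = pRev m (u+2) := by
      rcases Nat.lt_or_ge m ((u+2+a).choose a + 2) with hW1 | hW
      · -- W1 : m = b1 + 1
        have hm1 : m = (u+2+a).choose a + 1 := by omega
        refine ⟨m - (u+1+a).choose a, by omega, by omega, ?_⟩
        have hmk : m - (m - (u+1+a).choose a) = (u+1+a).choose a := by omega
        have ht1 : tRep (m - (u+1+a).choose a) (u+2) = a := by
          apply tRep_eq (by omega) (by omega)
          intro t' ht'
          have := hPa t' ht'.symm
          omega
        have ht2 : tRep ((u+1+a).choose a) (u+1) = a := by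
          apply tRep_eq (by omega) (le_refl _)
          intro t' ht'
          have := hQa t' ht'.symm
          omega
        rw [pRev_phi (m - (u+1+a).choose a), pRev_phi m, ht1, ha, pRev_phi, hmk, ht2]
        have hkey := keyB m (m - (u+1+a).choose a) a (u+1) (by omega) (by omega)
        rw [hmk] at hkey
        exact hkey
      · rcases Nat.lt_or_ge ((u+2+a).choose a + (u+1+a).choose a + 1) m with hW3 | hW2
        · -- W3 : m ≥ b1 + c1 + 2, take k = b1
          refine ⟨(u+2+a).choose a, by omega, by omega, ?_⟩
          have ht1 : tRep ((u+2+a).choose a) (u+2) = a := by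
            apply tRep_eq (by omega) (le_refl _)
            intro t' ht'
            have := hPa t' ht'.symm
            omega
          have ht2 : tRep (m - (u+2+a).choose a) (u+1) = a + 1 := by
            apply tRep_eq (by omega) (by omega)
            intro t' ht'
            have ht'' : t' = a := by omega
            subst ht''
            omega
          rw [pRev_phi ((u+2+a).choose a), pRev_phi m, ht1, ha, pRev_phi, ht2]
          exact keyA m ((u+2+a).choose a) a (u+1) (by omega)
        · -- W2 : b1 + 2 ≤ m ≤ b1 + c1 + 1, take k = m - c1 - 1
          refine ⟨m - (u+1+a).choose a - 1, by omega, by omega, ?_⟩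
          have hmk : m - (m - (u+1+a).choose a - 1) = (u+1+a).choose a + 1 := by omega
          have ht1 : tRep (m - (u+1+a).choose a - 1) (u+2) = a := by
            apply tRep_eq (by omega) (by omega)
            intro t' ht'
            have := hPa t' ht'.symm
            omega
          have ht2 : tRep ((u+1+a).choose a + 1) (u+1) = a + 1 := by
            apply tRep_eq (by omega) (by omega)
            intro t' ht'
            have ht'' : t' = a := by omega
            subst ht''
            omega
          rw [pRev_phi (m - (u+1+a).choose a - 1), pRev_phi m, ht1, ha, pRev_phi, hmk, ht2]
          have hkey := keyA m (m - (u+1+a).choose a - 1) a (u+1) (by omega)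
          rw [hmk] at hkey
          exact hkey
    obtain ⟨k, hk1, hk2, hkeq⟩ := main
    have hmem : k ∈ Finset.Icc 1 (m-1) := by rw [Finset.mem_Icc]; omega
    refine le_trans (Finset.inf'_le _ hmem) ?_
    show (k : ℤ) + pRev k (u+2) + pRev (m-k) (u+2-1) ≤ pRev m (u+2)
    have hred : u + 2 - 1 = u + 1 := rfl
    rw [hred, hkeq]
end

section
/- With p(m,s) = t·m − C(s+t,t−1) (t the repetition number for (m,s)): p(m,s) ≥ m − 1 for all m ≥ 1, s ≥ 1; moreover p(m,s) = m − 1 if and only if m ≤ s + 1. -/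
/-!
Write `t = u + 1` for the repetition number, so `C(s+u, u) < m ≤ C(s+u+1, u+1)`. Then
`p(m,s) - (m - 1) = u·m - C(s+u+1, u) + 1`. For `u = 0` this vanishes, and `t ≤ 1` is exactly
`m ≤ C(s+1, 1) = s + 1`. For `u ≥ 1` the ratio `C(s+u+1, u) / C(s+u, u) = (s+u+1)/(s+1)` gives
`C(s+u+1, u) ≤ u·(C(s+u, u) + 1) ≤ u·m`, so the difference is positive.
-/

lemma choose_succ_le_mul_succ (s : ℕ) {u : ℕ} (hu : 1 ≤ u) :
    (s + u + 1).choose u ≤ u * ((s + u).choose u + 1) := by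
  rcases s.eq_zero_or_pos with rfl | hs
  · rw [zero_add, Nat.choose_succ_self_right, Nat.choose_self]
    omega
  rcases hu.eq_or_lt with rfl | hu
  · simp
  have hratio : (s + u).choose u * (s + u + 1) = (s + u + 1).choose u * (s + 1) := by
    rw [Nat.choose_mul_succ_eq, show s + u + 1 - u = s + 1 by omega]
  refine Nat.le_of_mul_le_mul_right (c := s + 1) ?_ (by omega)
  have hsu : s + u + 1 ≤ (s + 1) * u := by nlinarith
  rw [← hratio]
  nlinarith [Nat.mul_le_mul_left ((s + u).choose u) hsu]

section RepetitionNumber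

variable {m s : ℕ}

lemma exists_le_choose (m : ℕ) (hs : 1 ≤ s) : ∃ t, m ≤ (s + t).choose t :=
  ⟨m, calc
    m ≤ (m + 1).choose m := by rw [Nat.choose_succ_self_right]; exact m.le_succ
    _ ≤ (s + m).choose m := Nat.choose_le_choose m (by omega)⟩

lemma le_choose_tRep (m : ℕ) (hs : 1 ≤ s) : m ≤ (s + tRep m s).choose (tRep m s) :=
  Nat.sInf_mem (exists_le_choose m hs)

lemma choose_lt_of_lt_tRep {t : ℕ} (ht : t < tRep m s) : (s + t).choose t < m :=
  not_le.1 (Nat.notMem_of_lt_sInf (s := {t | m ≤ (s + t).choose t}) ht)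

lemma tRep_le_one_iff (hs : 1 ≤ s) : tRep m s ≤ 1 ↔ m ≤ s + 1 := by
  constructor
  · intro h
    have hm := le_choose_tRep m hs
    rcases Nat.le_one_iff_eq_zero_or_eq_one.1 h with h | h <;> rw [h] at hm <;> simp at hm <;> omega
  · intro h
    exact Nat.sInf_le (by simpa using h)

lemma pRev_of_tRep_eq_succ {u : ℕ} (h : tRep m s = u + 1) :
    pRev m s = (u + 1) * m - (s + u + 1).choose u := by
  simp [pRev, h, add_assoc]

lemma pRev_eq_sub_one_of_tRep_le_one (hm : 1 ≤ m) (hs : 1 ≤ s) (h : tRep m s ≤ 1) :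
    pRev m s = m - 1 := by
  rcases Nat.le_one_iff_eq_zero_or_eq_one.1 h with h0 | h1
  · have hm1 : m = 1 := by
      have := le_choose_tRep m hs
      rw [h0, Nat.choose_zero_right] at this
      omega
    subst hm1
    simp [pRev, h0]
  · rw [pRev_of_tRep_eq_succ (u := 0) h1]
    simp

lemma sub_one_lt_pRev (h : 2 ≤ tRep m s) : (m : ℤ) - 1 < pRev m s := by
  obtain ⟨u, hu⟩ : ∃ u, tRep m s = u + 1 := ⟨tRep m s - 1, by omega⟩
  have hlt : (s + u).choose u < m := choose_lt_of_lt_tRep (by omega)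
  have hle : (s + u + 1).choose u ≤ u * m :=
    (choose_succ_le_mul_succ s (by omega)).trans (Nat.mul_le_mul_left u hlt)
  have hle' : ((s + u + 1).choose u : ℤ) ≤ u * m := by exact_mod_cast hle
  rw [pRev_of_tRep_eq_succ hu]
  linarith

end RepetitionNumber

/-- `p(m,s) ≥ m − 1` for all `m ≥ 1`, `s ≥ 1`; moreover `p(m,s) = m − 1` iff `m ≤ s + 1`. -/
theorem stmt3 (m s : ℕ) (hm : 1 ≤ m) (hs : 1 ≤ s) :
    (m : ℤ) - 1 ≤ pRev m s ∧ (pRev m s = (m : ℤ) - 1 ↔ m ≤ s + 1) := by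
  by_cases hms : m ≤ s + 1
  · have hp := pRev_eq_sub_one_of_tRep_le_one hm hs ((tRep_le_one_iff hs).2 hms)
    exact ⟨hp.ge, fun _ => hms, fun _ => hp⟩
  · have hT : 2 ≤ tRep m s := by
      rw [← tRep_le_one_iff hs] at hms
      omega
    have hp := sub_one_lt_pRev hT
    exact ⟨hp.le, fun h => absurd h hp.ne', fun h => absurd h hms⟩
end

section
/- Fix an integer ℓ ≥ 1 and define P_IS : ℕ × ℕ → ℕ by the recurrence P_IS(m,s) = min( min_{1≤m̃≤m−1} (m̃ + P_IS(m̃,s) + P_IS(m−m̃,s−1)), min_{1≤m̃≤m} (m̃−1 + P_IS(m̃−1,s) + P_IS(m−m̃,s−ℓ)) ), with P_IS(0,s)=0, P_IS(1,s)=0 for s ≥ 0, and P_IS(m,s)=+∞ when s < 0 is required. Then for all m, s, P_IS(m,s) ≤ p(m,s) where p(m,s) is the classical Revolve optimum t·m − C(s+t,t−1). -/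
/-!
The first branch of the recurrence is the classical Revolve recurrence, so `P_IS` is subadditive
along splittings `P(k + j, s) ≤ k + P(k, s) + P(j, s - 1)`, and this alone gives the Revolve bound.
For repetition number `t = r + 1` the interval `[C(s+r, r), C(s+r+1, r+1)]` of admissible `m` is,
by Pascal's rule, the sum of the intervals for `(s, t - 1)` and `(s - 1, t)`; hence `m` splits as
`k + j` with both parts admissible, and by induction and Pascal's rule again the three costs add up
exactly to `t m - C(s+t, t-1)`.
-/

open Finset

lemma Nat.exists_add_eq_of_mem_Icc_add {a b c d m : ℕ} (hab : a ≤ b) (hcd : c ≤ d)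
    (hlo : a + c ≤ m) (hhi : m ≤ b + d) :
    ∃ k j, k + j = m ∧ k ∈ Icc a b ∧ j ∈ Icc c d :=
  ⟨min b (m - c), m - min b (m - c), by omega, by simp only [mem_Icc]; omega,
    by simp only [mem_Icc]; omega⟩

section Revolve

variable {P : ℕ → ℕ → ℕ∞} (hP₁ : ∀ s, P 1 s = 0)
  (hsplit : ∀ k j s, 1 ≤ k → 1 ≤ j → P (k + j) (s + 1) ≤ k + P k (s + 1) + P j s)
include hP₁ hsplit

lemma add_one_le_of_le_add_one (s m : ℕ) (hm₁ : 1 ≤ m) (hm : m ≤ s + 1) : P m s + 1 ≤ m := by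
  induction s generalizing m with
  | zero =>
    obtain rfl : m = 1 := by omega
    simp [hP₁]
  | succ s ih =>
    obtain ⟨j, rfl⟩ : ∃ j, m = 1 + j := ⟨m - 1, by omega⟩
    rcases Nat.eq_zero_or_pos j with rfl | hj
    · simp [hP₁]
    calc P (1 + j) (s + 1) + 1 ≤ 1 + P 1 (s + 1) + P j s + 1 := by
          gcongr; exact hsplit 1 j s le_rfl hj
      _ = 1 + (P j s + 1) := by rw [hP₁]; ring
      _ ≤ 1 + j := by gcongr; exact ih j hj (by omega)
      _ = ((1 + j : ℕ) : ℕ∞) := by push_cast; rfl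

-- `P(m, s) ≤ t m - C(s+t, t-1)` for `t = r + 1`, written without subtraction.
lemma add_choose_le_succ_mul (s r m : ℕ) (hlo : (s + r).choose r ≤ m)
    (hhi : m ≤ (s + r + 1).choose (r + 1)) : P m s + (s + r + 1).choose r ≤ (r + 1) * m := by
  induction s generalizing r m with
  | zero =>
    simp only [zero_add, Nat.choose_self] at hlo hhi
    obtain rfl : m = 1 := by omega
    simp [hP₁, Nat.choose_succ_self_right]
  | succ s ih =>
    induction r generalizing m with
    | zero =>
      simp only [Nat.choose_zero_right, Nat.choose_one_right, Nat.cast_one, Nat.cast_zero,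
        zero_add, one_mul] at hlo hhi ⊢
      exact add_one_le_of_le_add_one hP₁ hsplit (s + 1) m hlo (by omega)
    | succ r ihr =>
      obtain ⟨n, hn⟩ : ∃ n, s + r + 1 = n := ⟨_, rfl⟩
      rw [show s + 1 + r = n by omega] at ihr
      have ihj := ih (r + 1)
      rw [show s + (r + 1) = n by omega] at ihj
      rw [show s + 1 + (r + 1) = n + 1 by omega] at hlo hhi ⊢
      rw [Nat.choose_succ_succ n r] at hlo
      rw [Nat.choose_succ_succ (n + 1) (r + 1)] at hhi
      rw [Nat.choose_succ_succ (n + 1) r]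
      have hmono (i : ℕ) : n.choose i ≤ (n + 1).choose (i + 1) := by
        rw [Nat.choose_succ_succ]; exact Nat.le_add_right _ _
      obtain ⟨k, j, rfl, hk, hj⟩ :=
        Nat.exists_add_eq_of_mem_Icc_add (hmono r) (hmono (r + 1)) hlo hhi
      rw [mem_Icc] at hk hj
      have hk₁ : 1 ≤ k := (Nat.choose_pos (by omega)).trans_le hk.1
      have hj₁ : 1 ≤ j := (Nat.choose_pos (by omega)).trans_le hj.1
      calc P (k + j) (s + 1) + ↑((n + 1).choose r + (n + 1).choose (r + 1))
          ≤ k + P k (s + 1) + P j s + ↑((n + 1).choose r + (n + 1).choose (r + 1)) := by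
            gcongr; exact hsplit k j s hk₁ hj₁
        _ = k + (P k (s + 1) + (n + 1).choose r) + (P j s + (n + 1).choose (r + 1)) := by
            push_cast; ring
        _ ≤ k + (r + 1) * k + (r + 1 + 1) * j := by
            gcongr
            · exact ihr k hk.1 hk.2
            · exact_mod_cast ihj j hj.1 hj.2
        _ = (↑(r + 1) + 1) * ↑(k + j) := by push_cast; ring

end Revolve

theorem stmt5_general (ℓ : ℕ) (PIS : ℕ → ℤ → ℕ∞)
    (h1 : ∀ s : ℤ, 0 ≤ s → PIS 1 s = 0)
    (hrec : ∀ (m : ℕ) (s : ℤ), 2 ≤ m → 0 ≤ s →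
      PIS m s = min
        (⨅ k ∈ Finset.Icc 1 (m - 1),
          ((k : ℕ∞) + PIS k s + PIS (m - k) (s - 1)))
        (⨅ k ∈ Finset.Icc 1 m,
          (((k - 1 : ℕ) : ℕ∞) + PIS (k - 1) s + PIS (m - k) (s - (ℓ : ℤ))))) :
    ∀ m s t q : ℕ, 1 ≤ m → 1 ≤ s →
      ((if t = 0 then 0 else (s + t - 1).choose (t - 1)) < m ∧ m ≤ (s + t).choose t) →
      (q : ℤ) = (t : ℤ) * m - (if t = 0 then 0 else ((s + t).choose (t - 1) : ℤ)) →
      PIS m (s : ℤ) ≤ (q : ℕ∞) := by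
  have hP₁ (s : ℕ) : PIS 1 s = 0 := h1 s s.cast_nonneg
  have hsplit (k j s : ℕ) (hk : 1 ≤ k) (hj : 1 ≤ j) :
      PIS (k + j) ↑(s + 1) ≤ k + PIS k ↑(s + 1) + PIS j s := by
    rw [hrec (k + j) _ (by omega) (Int.natCast_nonneg _)]
    refine (min_le_left _ _).trans <| (iInf₂_le k (by simp only [mem_Icc]; omega)).trans_eq ?_
    rw [Nat.add_sub_cancel_left, Nat.cast_succ, add_sub_cancel_right]
  intro m s t q hm _ ⟨hlo, hhi⟩ hq
  cases t with
  | zero =>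
    obtain rfl : m = 1 := by simp only [Nat.choose_zero_right] at hhi; omega
    simp [hP₁]
  | succ r =>
    simp only [Nat.add_one_ne_zero, if_false, Nat.add_sub_cancel, ← add_assoc] at hlo hq
    have hqC : q + (s + r + 1).choose r = (r + 1) * m := by
      have : ((q + (s + r + 1).choose r : ℕ) : ℤ) = ((r + 1) * m : ℕ) := by
        push_cast at hq ⊢; linarith
      exact_mod_cast this
    rw [← ENat.add_le_add_iff_right (ENat.natCast_ne_top ((s + r + 1).choose r))]
    calc PIS m s + (s + r + 1).choose r ≤ (r + 1) * m :=
          add_choose_le_succ_mul (P := fun m s => PIS m s) hP₁ hsplit s r m hlo.le hhi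
      _ = q + (s + r + 1).choose r := by exact_mod_cast hqC.symm

/-- Fix `ℓ ≥ 1` and let `P_IS` satisfy the CAMS-SA recurrence
(with value `⊤ = +∞` whenever a negative number of checkpointing units is required,
and `P_IS(0,s) = P_IS(1,s) = 0` for `s ≥ 0`).  Then for all `m, s`,
`P_IS(m,s) ≤ p(m,s)` where `p(m,s) = t·m − C(s+t, t−1)` is the classical Revolve
optimum with repetition number `t`. -/
theorem stmt5 (ℓ : ℕ) (hℓ : 1 ≤ ℓ) (PIS : ℕ → ℤ → ℕ∞)
    (hneg : ∀ (m : ℕ) (s : ℤ), s < 0 → PIS m s = ⊤)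
    (h0 : ∀ s : ℤ, 0 ≤ s → PIS 0 s = 0)
    (h1 : ∀ s : ℤ, 0 ≤ s → PIS 1 s = 0)
    (hrec : ∀ (m : ℕ) (s : ℤ), 2 ≤ m → 0 ≤ s →
      PIS m s = min
        (⨅ k ∈ Finset.Icc 1 (m - 1),
          ((k : ℕ∞) + PIS k s + PIS (m - k) (s - 1)))
        (⨅ k ∈ Finset.Icc 1 m,
          (((k - 1 : ℕ) : ℕ∞) + PIS (k - 1) s + PIS (m - k) (s - (ℓ : ℤ))))) :
    ∀ m s t q : ℕ, 1 ≤ m → 1 ≤ s →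
      ((if t = 0 then 0 else (s + t - 1).choose (t - 1)) < m ∧ m ≤ (s + t).choose t) →
      (q : ℤ) = (t : ℤ) * m - (if t = 0 then 0 else ((s + t).choose (t - 1) : ℤ)) →
      PIS m (s : ℤ) ≤ (q : ℕ∞) :=
  stmt5_general ℓ PIS h1 hrec
end

section
/- Let P_IS be defined by the CAMS-SA recurrence with stage number ℓ ≥ 1, and let s ≥ 0 be fixed. Then the function i ↦ P_IS(i,s) is nondecreasing in i; in particular P_IS(m−m̃, s) ≤ P_IS(m−m̃+1, s) for all valid m, m̃. -/
/-! Induction on `m`, for all `s` at once. Each candidate split `k` in the recurrence for `P(m+1, s)`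
either is the top split (`k = m`, resp. `k = m + 1`), whose cost already contains `P(m, s)`, or is
a valid split for `P(m, s)` whose tail `P(m+1-k, ·)` dominates `P(m-k, ·)` by the induction
hypothesis. -/

/-- The right-hand side of the CAMS-SA recurrence for `P(m, s)`. -/
noncomputable def camsRhs (ℓ : ℕ) (P : ℕ → ℤ → ℕ∞) (m : ℕ) (s : ℤ) : ℕ∞ :=
  min (⨅ k ∈ Finset.Icc 1 (m - 1), ((k : ℕ∞) + P k s + P (m - k) (s - 1)))
    (⨅ k ∈ Finset.Icc 1 m, (((k - 1 : ℕ) : ℕ∞) + P (k - 1) s + P (m - k) (s - (ℓ : ℤ))))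

lemma le_camsRhs_succ {ℓ : ℕ} {P : ℕ → ℤ → ℕ∞} {m : ℕ} {s : ℤ}
    (ih : ∀ j < m, ∀ t, P j t ≤ P (j + 1) t) (hm : P m s ≤ camsRhs ℓ P m s) :
    P m s ≤ camsRhs ℓ P (m + 1) s := by
  have tail_le (k : ℕ) (hk : 1 ≤ k) (hkm : k ≤ m) (t : ℤ) : P (m - k) t ≤ P (m + 1 - k) t := by
    rw [show m + 1 - k = m - k + 1 by omega]
    exact ih _ (by omega) t
  refine le_min (le_iInf₂ fun k hk => ?_) (le_iInf₂ fun k hk => ?_) <;>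
    obtain ⟨hk1, hkm⟩ := Finset.mem_Icc.mp hk
  · obtain rfl | hkm := (show k ≤ m by omega).eq_or_lt
    · exact le_add_self.trans le_self_add
    calc P m s ≤ (k : ℕ∞) + P k s + P (m - k) (s - 1) :=
          hm.trans <| (min_le_left _ _).trans <| iInf₂_le k <| Finset.mem_Icc.mpr ⟨hk1, by omega⟩
      _ ≤ (k : ℕ∞) + P k s + P (m + 1 - k) (s - 1) := by gcongr; exact tail_le k hk1 hkm.le _
  · obtain rfl | hkm := hkm.eq_or_lt
    · simpa using le_add_self.trans le_self_add
    calc P m s ≤ ((k - 1 : ℕ) : ℕ∞) + P (k - 1) s + P (m - k) (s - ℓ) :=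
          hm.trans <| (min_le_right _ _).trans <| iInf₂_le k <| Finset.mem_Icc.mpr ⟨hk1, by omega⟩
      _ ≤ ((k - 1 : ℕ) : ℕ∞) + P (k - 1) s + P (m + 1 - k) (s - ℓ) := by
          gcongr; exact tail_le k hk1 (by omega) _

lemma le_succ_of_camsRecurrence {ℓ : ℕ} {P : ℕ → ℤ → ℕ∞}
    (hneg : ∀ m s, s < 0 → P m s = ⊤) (h0 : ∀ s, 0 ≤ s → P 0 s = 0)
    (h1 : ∀ s, 0 ≤ s → P 1 s = 0)
    (hrec : ∀ m s, 2 ≤ m → 0 ≤ s → P m s = camsRhs ℓ P m s) (m : ℕ) (s : ℤ) :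
    P m s ≤ P (m + 1) s := by
  induction m using Nat.strong_induction_on generalizing s with
  | _ m ih =>
  rcases lt_or_ge s 0 with hs | hs
  · simp [hneg _ _ hs]
  obtain rfl | rfl | hm : m = 0 ∨ m = 1 ∨ 2 ≤ m := by omega
  · simp [h0 s hs]
  · simp [h1 s hs]
  rw [hrec (m + 1) s (by omega) hs]
  exact le_camsRhs_succ ih (hrec m s hm hs).le

theorem stmt6_general (ℓ : ℕ) (PIS : ℕ → ℤ → ℕ∞)
    (hneg : ∀ (m : ℕ) (s : ℤ), s < 0 → PIS m s = ⊤)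
    (h0 : ∀ s : ℤ, 0 ≤ s → PIS 0 s = 0)
    (h1 : ∀ s : ℤ, 0 ≤ s → PIS 1 s = 0)
    (hrec : ∀ (m : ℕ) (s : ℤ), 2 ≤ m → 0 ≤ s →
      PIS m s = min
        (⨅ k ∈ Finset.Icc 1 (m - 1),
          ((k : ℕ∞) + PIS k s + PIS (m - k) (s - 1)))
        (⨅ k ∈ Finset.Icc 1 m,
          (((k - 1 : ℕ) : ℕ∞) + PIS (k - 1) s + PIS (m - k) (s - (ℓ : ℤ)))))
    (s : ℤ) :
    Monotone (fun i : ℕ => PIS i s) :=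
  monotone_nat_of_le_succ fun i => le_succ_of_camsRecurrence hneg h0 h1 hrec i s

/-- Let `P_IS` satisfy the CAMS-SA recurrence with stage number `ℓ ≥ 1`, and fix `s ≥ 0`.
Then `i ↦ P_IS(i,s)` is nondecreasing in `i`. -/
theorem stmt6 (ℓ : ℕ) (hℓ : 1 ≤ ℓ) (PIS : ℕ → ℤ → ℕ∞)
    (hneg : ∀ (m : ℕ) (s : ℤ), s < 0 → PIS m s = ⊤)
    (h0 : ∀ s : ℤ, 0 ≤ s → PIS 0 s = 0)
    (h1 : ∀ s : ℤ, 0 ≤ s → PIS 1 s = 0)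
    (hrec : ∀ (m : ℕ) (s : ℤ), 2 ≤ m → 0 ≤ s →
      PIS m s = min
        (⨅ k ∈ Finset.Icc 1 (m - 1),
          ((k : ℕ∞) + PIS k s + PIS (m - k) (s - 1)))
        (⨅ k ∈ Finset.Icc 1 m,
          (((k - 1 : ℕ) : ℕ∞) + PIS (k - 1) s + PIS (m - k) (s - (ℓ : ℤ)))))
    (s : ℤ) (hs : 0 ≤ s) :
    Monotone (fun i : ℕ => PIS i s) :=
  stmt6_general ℓ PIS hneg h0 h1 hrec s
end
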